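/- Let n and m be finite index types, let Φ : Matrix n n ℂ → Matrix m m ℂ be a ℂ-linear map sending positive semidefinite matrices to positive semidefinite matrices, let σ, τ, ρ be density matrices on the n-indexed space with ρ = F·σ + (1−F)·τ for a real F, and let β, F_T ∈ [0,1] be reals with (1−β)·F_T ≤ F ≤ 1. Assume Φ(σ) is positive semidefinite with Tr(Φ(σ)·Φ(σ)) = 1 (a pure state) and that Re Tr(Φ(ρ)) ≤ 1. Then the probability of an incorrect outcome obeys Re Tr((I − Φ(σ))·Φ(ρ)) ≤ 1 − (1−β)·F_T. -/

import Mathlib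

open Matrix ComplexOrder

/-! Expanding `Φ ρ = F • Φ σ + (1 - F) • Φ τ`, the overlap `Tr (Φ σ * Φ ρ)` equals
`F * Tr (Φ σ * Φ σ) + (1 - F) * Tr (Φ σ * Φ τ)`; the first trace is `1` by purity and the
second is nonnegative as the trace of a product of positive semidefinite matrices, so the
overlap is at least `F`. Hence the weight of `Φ ρ` on `1 - Φ σ` is at most
`Tr (Φ ρ) - F ≤ 1 - F ≤ 1 - (1 - β) F_T`. -/

open scoped MatrixOrder in
/-- `Tr (A B) = Tr (√B A √B)`, and `√B A √B` is positive semidefinite. -/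
theorem Matrix.PosSemidef.trace_mul_nonneg {n 𝕜 : Type*} [Fintype n] [DecidableEq n] [RCLike 𝕜]
    {A B : Matrix n n 𝕜} (hA : A.PosSemidef) (hB : B.PosSemidef) : 0 ≤ (A * B).trace := by
  set S := CFC.sqrt B
  have hSS : S * S = B := CFC.sqrt_mul_sqrt_self B hB.nonneg
  have hS : Sᴴ = S := (CFC.sqrt_nonneg B).posSemidef.isHermitian
  have hcycle : (A * B).trace = (S * A * S).trace := by
    rw [← hSS, ← Matrix.mul_assoc, Matrix.trace_mul_cycle]
  simpa [hcycle, hS] using (hA.conjTranspose_mul_mul_same S).trace_nonneg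

theorem le_re_trace_mul_smul_add_smul {m : Type*} [Fintype m] [DecidableEq m]
    {P T : Matrix m m ℂ} (hP : P.PosSemidef) (hT : T.PosSemidef) (hPP : (P * P).trace = 1)
    {F : ℝ} (hF : F ≤ 1) :
    F ≤ (P * ((F : ℂ) • P + ((1 - F : ℝ) : ℂ) • T)).trace.re := by
  have hPT : 0 ≤ (P * T).trace.re := (Complex.nonneg_iff.mp (hP.trace_mul_nonneg hT)).1
  have hexpand : (P * ((F : ℂ) • P + ((1 - F : ℝ) : ℂ) • T)).trace.re
      = F * (P * P).trace.re + (1 - F) * (P * T).trace.re := by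
    simp [Matrix.mul_add, Matrix.trace_add]
  rw [hexpand, hPP, Complex.one_re]
  linarith [mul_nonneg (sub_nonneg.mpr hF) hPT]

theorem verifiability_incorrect_outcome_bound_general
    {n m : Type*} [Fintype n] [DecidableEq n] [Fintype m] [DecidableEq m]
    (Φ : Matrix n n ℂ →ₗ[ℂ] Matrix m m ℂ)
    (hΦpos : ∀ A : Matrix n n ℂ, A.PosSemidef → (Φ A).PosSemidef)
    (σ τ ρ : Matrix n n ℂ)
    (hτ : τ.PosSemidef)
    (F β F_T : ℝ)
    (hFlow : (1 - β) * F_T ≤ F) (hF1 : F ≤ 1)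
    (hdecomp : ρ = (F : ℂ) • σ + ((1 - F : ℝ) : ℂ) • τ)
    (hΦσpsd : (Φ σ).PosSemidef) (hΦσpure : ((Φ σ) * (Φ σ)).trace = 1)
    (hΦρtr : ((Φ ρ).trace).re ≤ 1) :
    (((1 - Φ σ) * Φ ρ).trace).re ≤ 1 - (1 - β) * F_T := by
  have hΦρ : Φ ρ = (F : ℂ) • Φ σ + ((1 - F : ℝ) : ℂ) • Φ τ := by
    rw [hdecomp, map_add, map_smul, map_smul]
  have hoverlap : F ≤ (Φ σ * Φ ρ).trace.re := by
    rw [hΦρ]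
    exact le_re_trace_mul_smul_add_smul hΦσpsd (hΦpos τ hτ) hΦσpure hF1
  rw [Matrix.sub_mul, Matrix.one_mul, Matrix.trace_sub, Complex.sub_re]
  linarith

/-- ε-verifiability, Lemma 1 + Theorem 2: For a positive ℂ-linear map Φ,
density matrices σ, τ, ρ with ρ = F·σ + (1−F)·τ, reals β, F_T ∈ [0,1] with
(1−β)·F_T ≤ F ≤ 1, if Φ(σ) is PSD with Tr(Φ(σ)·Φ(σ)) = 1 (a pure state) and
Re Tr(Φ(ρ)) ≤ 1, then the probability of an incorrect outcome obeys
Re Tr((I − Φ(σ))·Φ(ρ)) ≤ 1 − (1−β)·F_T. -/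
theorem verifiability_incorrect_outcome_bound
    {n m : Type*} [Fintype n] [DecidableEq n] [Fintype m] [DecidableEq m]
    (Φ : Matrix n n ℂ →ₗ[ℂ] Matrix m m ℂ)
    (hΦpos : ∀ A : Matrix n n ℂ, A.PosSemidef → (Φ A).PosSemidef)
    (σ τ ρ : Matrix n n ℂ)
    (hσ : σ.PosSemidef) (hσtr : σ.trace = 1)
    (hτ : τ.PosSemidef) (hτtr : τ.trace = 1)
    (hρ : ρ.PosSemidef) (hρtr : ρ.trace = 1)
    (F β F_T : ℝ)
    (hβ0 : 0 ≤ β) (hβ1 : β ≤ 1) (hFT0 : 0 ≤ F_T) (hFT1 : F_T ≤ 1)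
    (hFlow : (1 - β) * F_T ≤ F) (hF1 : F ≤ 1)
    (hdecomp : ρ = (F : ℂ) • σ + ((1 - F : ℝ) : ℂ) • τ)
    (hΦσpsd : (Φ σ).PosSemidef) (hΦσpure : ((Φ σ) * (Φ σ)).trace = 1)
    (hΦρtr : ((Φ ρ).trace).re ≤ 1) :
    (((1 - Φ σ) * Φ ρ).trace).re ≤ 1 - (1 - β) * F_T :=
  verifiability_incorrect_outcome_bound_general Φ hΦpos σ τ ρ hτ F β F_T hFlow hF1 hdecomp hΦσpsd
    hΦσpure hΦρtr
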